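/- For every t > 0 and every c ∈ ℝ², ∫_{ℝ²} (2πt)^{−1} exp(−|x − c|²/(2t)) · (2π|x|)^{−1} dx ≤ 1/(2√(2πt)), with equality when c = 0. -/

import Mathlib

open MeasureTheory Real Set

noncomputable def Gp (t m : ℝ) : ℝ := ∫ r in Set.Ioi (0:ℝ), Real.exp (-(r - m)^2 / (2*t))

lemma integrable_gauss_shift {t : ℝ} (ht : 0 < t) (m : ℝ) :
    Integrable (fun x : ℝ => Real.exp (-(x - m)^2 / (2*t))) := by
  have h := (integrable_exp_neg_mul_sq (b := (2*t)⁻¹) (by positivity)).comp_sub_right (g := m)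
  have e : (fun x : ℝ => Real.exp (-(x - m)^2/(2*t)))
      = fun x : ℝ => Real.exp (-(2*t)⁻¹ * (x - m)^2) := by
    funext x; congr 1; ring
  rw [e]; exact h

lemma integral_gauss_shift {t : ℝ} (ht : 0 < t) (m : ℝ) :
    (∫ x : ℝ, Real.exp (-(x - m)^2 / (2*t))) = Real.sqrt (2*π*t) := by
  rw [integral_sub_right_eq_self (fun x => Real.exp (-x^2/(2*t))) m]
  have e : ∀ x : ℝ, -x^2/(2*t) = -(2*t)⁻¹ * x^2 := fun x => by ring
  simp_rw [e, integral_gaussian]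
  congr 1
  field_simp

lemma Gp_add {t : ℝ} (ht : 0 < t) (m : ℝ) :
    Gp t m + Gp t (-m) = Real.sqrt (2*π*t) := by
  have h2 : Gp t (-m) = ∫ x in Iic (0:ℝ), Real.exp (-(x - m)^2/(2*t)) := by
    have h := integral_comp_neg_Ioi (0:ℝ) (fun x => Real.exp (-(x - m)^2/(2*t)))
    rw [neg_zero] at h
    rw [← h]
    unfold Gp
    apply setIntegral_congr_fun measurableSet_Ioi
    intro x _
    simp only
    rw [Real.exp_eq_exp]
    ring
  rw [h2, add_comm, Gp,
    intervalIntegral.integral_Iic_add_Ioi ((integrable_gauss_shift ht m).integrableOn)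
      ((integrable_gauss_shift ht m).integrableOn),
    integral_gauss_shift ht m]

lemma Gp_nonneg (t m : ℝ) : 0 ≤ Gp t m :=
  integral_nonneg fun _ => (Real.exp_pos _).le

lemma Gp_le {t : ℝ} (ht : 0 < t) (m : ℝ) : Gp t m ≤ Real.sqrt (2*π*t) := by
  have := Gp_add ht m
  have := Gp_nonneg t (-m)
  linarith

lemma Gp_meas (t : ℝ) : StronglyMeasurable (Gp t) := by
  apply MeasureTheory.StronglyMeasurable.integral_prod_right'
    (f := fun p : ℝ × ℝ => Real.exp (-(p.2 - p.1)^2/(2*t)))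
  exact (Continuous.stronglyMeasurable (by fun_prop))

noncomputable def mm (c : ℂ) (θ : ℝ) : ℝ := Real.cos θ * c.re + Real.sin θ * c.im

lemma norm_expand (c : ℂ) (r θ : ℝ) :
    ‖(r : ℂ) * (Real.cos θ + Real.sin θ * Complex.I) - c‖^2
      = (r - mm c θ)^2 + (‖c‖^2 - (mm c θ)^2) := by
  rw [Complex.sq_norm, Complex.normSq_apply,
    Complex.sq_norm, Complex.normSq_apply]
  simp only [Complex.sub_re, Complex.sub_im, Complex.mul_re, Complex.mul_im, Complex.add_re,
    Complex.add_im, Complex.ofReal_re, Complex.ofReal_im, Complex.I_re, Complex.I_im, mm]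
  ring_nf
  nlinarith [Real.sin_sq_add_cos_sq θ, sq_nonneg r]

lemma mm_sq_le (c : ℂ) (θ : ℝ) : (mm c θ)^2 ≤ ‖c‖^2 := by
  have h : ‖c‖^2 = c.re^2 + c.im^2 := by
    rw [Complex.sq_norm, Complex.normSq_apply]; ring
  rw [h, mm]
  nlinarith [Real.sin_sq_add_cos_sq θ, sq_nonneg (Real.sin θ * c.re - Real.cos θ * c.im)]

lemma mm_shift (c : ℂ) (θ : ℝ) : mm c (θ - π) = -(mm c θ) := by
  simp [mm, Real.cos_sub_pi, Real.sin_sub_pi]; ring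

lemma key (t : ℝ) (ht : 0 < t) (c : ℂ) :
    (∫ x : ℂ, (2*π*t)⁻¹ * Real.exp (-‖x - c‖^2/(2*t)) * (2*π*‖x‖)⁻¹)
      = (2*π*t)⁻¹ * (2*π)⁻¹ *
        ∫ θ in Ioo (-π) π, Real.exp (-(‖c‖^2 - (mm c θ)^2)/(2*t)) * Gp t (mm c θ) := by
  have hT : MeasurableSet (Ioi (0:ℝ) ×ˢ Ioo (-π) π) := measurableSet_Ioi.prod measurableSet_Ioo
  set H : ℝ × ℝ → ℝ := fun p =>
    Real.exp (-‖(p.1 : ℂ) * (Real.cos p.2 + Real.sin p.2 * Complex.I) - c‖^2/(2*t)) with hHdef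
  have hHcont : Continuous H := by fun_prop
  have hznorm : ∀ r θ : ℝ, 0 < r →
      ‖(r : ℂ) * (Real.cos θ + Real.sin θ * Complex.I)‖ = r := by
    intro r θ hr
    rw [norm_mul, Complex.norm_real, Real.norm_eq_abs, abs_of_pos hr,
      Complex.ofReal_cos, Complex.ofReal_sin, Complex.norm_cos_add_sin_mul_I, mul_one]
  have h1 : (∫ x : ℂ, (2*π*t)⁻¹ * Real.exp (-‖x - c‖^2/(2*t)) * (2*π*‖x‖)⁻¹)
      = ∫ p in Ioi (0:ℝ) ×ˢ Ioo (-π) π, (2*π*t)⁻¹ * (2*π)⁻¹ * H p := by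
    rw [← Complex.integral_comp_polarCoord_symm
      (fun x => (2*π*t)⁻¹ * Real.exp (-‖x - c‖^2/(2*t)) * (2*π*‖x‖)⁻¹), polarCoord_target]
    apply setIntegral_congr_fun hT
    rintro ⟨r, θ⟩ hp
    have hr : (0:ℝ) < r := hp.1
    simp only [Complex.polarCoord_symm_apply, smul_eq_mul, hHdef, hznorm r θ hr]
    have h2pi : (2*π) ≠ 0 := by positivity
    field_simp
  have hInt : Integrable H ((volume.restrict (Ioi 0)).prod (volume.restrict (Ioo (-π) π))) := by
    have hg : Integrable (fun p : ℝ × ℝ => Real.exp (-(p.1 - ‖c‖)^2/(2*t)) * 1)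
        ((volume.restrict (Ioi 0)).prod (volume.restrict (Ioo (-π) π))) := by
      exact Integrable.mul_prod (L := ℝ) ((integrable_gauss_shift ht ‖c‖).restrict)
        ((integrableOn_const_iff).mpr (Or.inr (by rw [Real.volume_Ioo]; exact ENNReal.ofReal_lt_top)))
    apply Integrable.mono' hg hHcont.aestronglyMeasurable
    rw [Measure.prod_restrict]
    filter_upwards [ae_restrict_mem hT] with p hp
    have hr : (0:ℝ) < p.1 := hp.1
    have hz : ‖(p.1 : ℂ) * (Real.cos p.2 + Real.sin p.2 * Complex.I)‖ = p.1 := hznorm _ _ hr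
    have hb : (p.1 - ‖c‖)^2 ≤ ‖(p.1 : ℂ) * (Real.cos p.2 + Real.sin p.2 * Complex.I) - c‖^2 := by
      have h1 := abs_norm_sub_norm_le ((p.1 : ℂ) * (Real.cos p.2 + Real.sin p.2 * Complex.I)) c
      rw [hz] at h1
      calc (p.1 - ‖c‖)^2 = |p.1 - ‖c‖|^2 := (sq_abs _).symm
        _ ≤ _ := pow_le_pow_left₀ (abs_nonneg _) h1 2
    rw [Real.norm_eq_abs, abs_of_pos (Real.exp_pos _), mul_one]
    apply Real.exp_le_exp.mpr
    rw [neg_div, neg_div, neg_le_neg_iff]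
    exact div_le_div_of_nonneg_right hb (by positivity)
  have h3 : (∫ p in Ioi (0:ℝ) ×ˢ Ioo (-π) π, H p)
      = ∫ θ in Ioo (-π) π, ∫ r in Ioi (0:ℝ), H (r, θ) := by
    rw [Measure.volume_eq_prod, ← Measure.prod_restrict]
    exact integral_prod_symm H hInt
  have h4 : ∀ θ : ℝ, (∫ r in Ioi (0:ℝ), H (r, θ))
      = Real.exp (-(‖c‖^2 - (mm c θ)^2)/(2*t)) * Gp t (mm c θ) := by
    intro θ
    have hpt : ∀ r : ℝ, H (r, θ)
        = Real.exp (-(‖c‖^2 - (mm c θ)^2)/(2*t)) * Real.exp (-(r - mm c θ)^2/(2*t)) := by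
      intro r
      rw [hHdef]
      simp only
      rw [← Real.exp_add, Real.exp_eq_exp, norm_expand c r θ]
      ring
    simp_rw [hpt]
    rw [integral_const_mul, Gp]
  rw [h1, integral_const_mul, h3]
  congr 1
  exact setIntegral_congr_fun measurableSet_Ioo fun θ _ => h4 θ

lemma Gp_comp_aesm (t : ℝ) {f : ℝ → ℝ} (hf : Continuous f) (μ : Measure ℝ) :
    AEStronglyMeasurable (fun θ => Gp t (f θ)) μ :=
  ((Gp_meas t).comp_measurable hf.measurable).aestronglyMeasurable

lemma integrableOn_Gp_comp (t : ℝ) (ht : 0 < t) {f : ℝ → ℝ} (hf : Continuous f) :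
    IntegrableOn (fun θ => Gp t (f θ)) (Ioo (-π) π) := by
  apply Integrable.mono' (g := fun _ => Real.sqrt (2*π*t))
    ((integrableOn_const_iff).mpr (Or.inr (by rw [Real.volume_Ioo]; exact ENNReal.ofReal_lt_top)))
    (Gp_comp_aesm t hf _)
  exact ae_of_all _ fun θ => by
    rw [Real.norm_eq_abs, abs_of_nonneg (Gp_nonneg _ _)]; exact Gp_le ht _

lemma intervalIntegrable_Gp_comp (t : ℝ) (ht : 0 < t) {f : ℝ → ℝ} (hf : Continuous f)
    (u v : ℝ) : IntervalIntegrable (fun θ => Gp t (f θ)) volume u v := by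
  rw [intervalIntegrable_iff]
  apply Integrable.mono' (g := fun _ => Real.sqrt (2*π*t))
    ((integrableOn_const_iff).mpr (Or.inr (by rw [Set.uIoc, Real.volume_Ioc]; exact ENNReal.ofReal_lt_top)))
    (Gp_comp_aesm t hf _)
  exact ae_of_all _ fun θ => by
    rw [Real.norm_eq_abs, abs_of_nonneg (Gp_nonneg _ _)]; exact Gp_le ht _

lemma theta_integral (t : ℝ) (ht : 0 < t) (c : ℂ) :
    (∫ θ in Ioo (-π) π, Gp t (mm c θ)) = π * Real.sqrt (2*π*t) := by
  have hc : Continuous (mm c) := by unfold mm; fun_prop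
  have hii := intervalIntegrable_Gp_comp t ht hc
  rw [← integral_Ioc_eq_integral_Ioo,
    ← intervalIntegral.integral_of_le (by linarith [Real.pi_pos] : (-π:ℝ) ≤ π),
    ← intervalIntegral.integral_add_adjacent_intervals (b := 0) (hii (-π) 0) (hii 0 π)]
  have hshift : (∫ θ in (-π)..(0:ℝ), Gp t (mm c θ)) = ∫ θ in (0:ℝ)..π, Gp t (-(mm c θ)) := by
    have h := intervalIntegral.integral_comp_sub_right (a := (0:ℝ)) (b := π)
      (fun θ => Gp t (mm c θ)) π
    simp only [zero_sub, sub_self] at h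
    rw [← h]
    apply intervalIntegral.integral_congr
    intro θ _
    simp only [mm_shift]
  rw [hshift, ← intervalIntegral.integral_add (intervalIntegrable_Gp_comp t ht (f := fun θ => -(mm c θ)) hc.neg 0 π)
    (hii 0 π)]
  have hcongr : ∀ θ ∈ Set.uIcc (0:ℝ) π, Gp t (-(mm c θ)) + Gp t (mm c θ) = Real.sqrt (2*π*t) :=
    fun θ _ => by rw [add_comm]; exact Gp_add ht _
  rw [intervalIntegral.integral_congr hcongr]
  simp

theorem stmt9 (t : ℝ) (ht : 0 < t) (c : ℂ) :
    (∫ x : ℂ, (2 * Real.pi * t)⁻¹ * Real.exp (-‖x - c‖ ^ 2 / (2 * t)) *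
        (2 * Real.pi * ‖x‖)⁻¹) ≤ 1 / (2 * Real.sqrt (2 * Real.pi * t)) ∧
    (c = 0 →
      (∫ x : ℂ, (2 * Real.pi * t)⁻¹ * Real.exp (-‖x - c‖ ^ 2 / (2 * t)) *
          (2 * Real.pi * ‖x‖)⁻¹) = 1 / (2 * Real.sqrt (2 * Real.pi * t))) := by
  have hpi := Real.pi_pos
  have hs : (0:ℝ) < 2*π*t := by positivity
  have hsq : Real.sqrt (2*π*t) ^ 2 = 2*π*t := Real.sq_sqrt hs.le
  have hsqpos : (0:ℝ) < Real.sqrt (2*π*t) := Real.sqrt_pos.mpr hs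
  have hc : Continuous (mm c) := by unfold mm; fun_prop
  have harith : (2*π*t)⁻¹ * (2*π)⁻¹ * (π * Real.sqrt (2*π*t)) = 1/(2*Real.sqrt (2*π*t)) := by
    set u := Real.sqrt (2*π*t) with hu
    rw [eq_div_iff (by positivity)]
    field_simp
    nlinarith [hsq, hpi, ht]
  have hkey := key t ht c
  constructor
  · rw [hkey]
    have hgint : IntegrableOn (fun θ => Gp t (mm c θ)) (Ioo (-π) π) :=
      integrableOn_Gp_comp t ht hc
    have hfub : IntegrableOn
        (fun θ => Real.exp (-(‖c‖^2 - (mm c θ)^2)/(2*t)) * Gp t (mm c θ)) (Ioo (-π) π) := by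
      apply Integrable.mono' hgint
      · exact (((Real.continuous_exp.comp (by fun_prop)).aestronglyMeasurable).mul
          (Gp_comp_aesm t hc _))
      · refine ae_of_all _ fun θ => ?_
        rw [Real.norm_eq_abs, abs_of_nonneg (mul_nonneg (Real.exp_pos _).le (Gp_nonneg _ _))]
        apply mul_le_of_le_one_left (Gp_nonneg _ _)
        rw [Real.exp_le_one_iff, neg_div, neg_nonpos]
        exact div_nonneg (by nlinarith [mm_sq_le c θ]) (by positivity)
    have hmono : (∫ θ in Ioo (-π) π, Real.exp (-(‖c‖^2 - (mm c θ)^2)/(2*t)) * Gp t (mm c θ))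
        ≤ ∫ θ in Ioo (-π) π, Gp t (mm c θ) := by
      apply setIntegral_mono_on hfub hgint measurableSet_Ioo
      intro θ _
      apply mul_le_of_le_one_left (Gp_nonneg _ _)
      rw [Real.exp_le_one_iff, neg_div, neg_nonpos]
      exact div_nonneg (by nlinarith [mm_sq_le c θ]) (by positivity)
    calc (2*π*t)⁻¹ * (2*π)⁻¹ *
          ∫ θ in Ioo (-π) π, Real.exp (-(‖c‖^2 - (mm c θ)^2)/(2*t)) * Gp t (mm c θ)
        ≤ (2*π*t)⁻¹ * (2*π)⁻¹ * ∫ θ in Ioo (-π) π, Gp t (mm c θ) := by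
          apply mul_le_mul_of_nonneg_left hmono (by positivity)
      _ = 1/(2*Real.sqrt (2*π*t)) := by rw [theta_integral t ht c, harith]
  · intro hc0
    subst hc0
    rw [hkey]
    have hmm : ∀ θ : ℝ, mm 0 θ = 0 := fun θ => by simp [mm]
    have hval : (∫ θ in Ioo (-π) π, Real.exp (-(‖(0:ℂ)‖^2 - (mm 0 θ)^2)/(2*t)) * Gp t (mm 0 θ))
        = π * Real.sqrt (2*π*t) := by
      have : ∀ θ : ℝ, Real.exp (-(‖(0:ℂ)‖^2 - (mm 0 θ)^2)/(2*t)) * Gp t (mm 0 θ)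
          = Gp t (mm 0 θ) := by
        intro θ
        rw [hmm θ]
        norm_num
      rw [setIntegral_congr_fun measurableSet_Ioo fun θ _ => this θ]
      exact theta_integral t ht 0
    rw [hval, harith]
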